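/- Let a and b be integers with 2 ≤ a ≤ b ≤ 2a. Then the 2-total bondage number of the complete bipartite graph K_{a,b} equals b: b_t^2(K_{a,b}) = b. -/

import Mathlib

open SimpleGraph

/-- A set `S` of vertices is a total dominating set of `G` if every vertex of `G`
is adjacent to at least one vertex of `S`. -/
def IsTotalDominatingSet {V : Type*} (G : SimpleGraph V) (S : Set V) : Prop :=
  ∀ v : V, ∃ u ∈ S, G.Adj v u

/-- The total domination number of `G`: the minimum cardinality of a total
dominating set of `G`. -/
noncomputable def totalDominationNumber {V : Type*} (G : SimpleGraph V) : ℕ :=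
  sInf {n : ℕ | ∃ S : Set V, S.ncard = n ∧ IsTotalDominatingSet G S}

/-- A graph has no isolated vertices if every vertex has a neighbor. -/
def NoIsolatedVerts {V : Type*} (G : SimpleGraph V) : Prop :=
  ∀ v : V, ∃ u : V, G.Adj v u

/-- The `k`-total bondage number of `G`: the minimum cardinality of a set `F` of
edges of `G` such that `G − F` has no isolated vertices and the total domination
number of `G − F` is at least `γ_t(G) + k`. -/
noncomputable def kTotalBondage {V : Type*} (G : SimpleGraph V) (k : ℕ) : ℕ :=
  sInf {m : ℕ | ∃ F : Set (Sym2 V), F ⊆ G.edgeSet ∧ F.ncard = m ∧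
    NoIsolatedVerts (G.deleteEdges F) ∧
    totalDominationNumber G + k ≤ totalDominationNumber (G.deleteEdges F)}

/-!
Deleting, along a surjection `σ : β → α`, the edge `σ y — y` at every `y ∈ β` leaves every vertex
of either side with a non-neighbour on the other side, so a total dominating set needs two vertices
on each side: `γ_t` rises from 2 to 4 at the cost of `|β|` edges. Conversely, if fewer than
`|β| ≤ 2|α|` edges are deleted, some `y₀ ∈ β` keeps all its edges and some `x₁ ∈ α` loses at most
one, to `y₁` say; then `y₀`, `x₁` and a remaining neighbour of `y₁` dominate, so `γ_t ≤ 3`.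
-/

open Function Sum

variable {V α β : Type*}

theorem IsTotalDominatingSet.noIsolatedVerts {G : SimpleGraph V} {S : Set V}
    (hS : IsTotalDominatingSet G S) : NoIsolatedVerts G :=
  fun v => (hS v).imp fun _ hu => hu.2

theorem NoIsolatedVerts.isTotalDominatingSet_univ {G : SimpleGraph V} (hG : NoIsolatedVerts G) :
    IsTotalDominatingSet G Set.univ :=
  fun v => (hG v).imp fun _ hu => ⟨trivial, hu⟩

theorem totalDominationNumber_le_ncard {G : SimpleGraph V} {S : Set V}
    (hS : IsTotalDominatingSet G S) : totalDominationNumber G ≤ S.ncard :=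
  Nat.sInf_le ⟨S, rfl, hS⟩

theorem le_totalDominationNumber {G : SimpleGraph V} {k : ℕ} (hG : NoIsolatedVerts G)
    (h : ∀ S, IsTotalDominatingSet G S → k ≤ S.ncard) : k ≤ totalDominationNumber G :=
  le_csInf ⟨_, _, rfl, hG.isTotalDominatingSet_univ⟩ fun _ ⟨S, hS, hTDS⟩ => hS ▸ h S hTDS

theorem IsTotalDominatingSet.two_le_ncard_inter [Finite V] {G : SimpleGraph V} {S A B : Set V}
    (hS : IsTotalDominatingSet G S) (hB : B.Nonempty)
    (hBA : ∀ v ∈ B, ∀ u, G.Adj v u → u ∈ A) (hA : ∀ u ∈ A, ∃ v ∈ B, ¬G.Adj v u) :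
    2 ≤ (S ∩ A).ncard := by
  obtain ⟨v, hv⟩ := hB
  obtain ⟨u, huS, hvu⟩ := hS v
  obtain ⟨w, hw, hwu⟩ := hA u (hBA v hv u hvu)
  obtain ⟨u', hu'S, hwu'⟩ := hS w
  have hne : u ≠ u' := by rintro rfl; exact hwu hwu'
  calc 2 = ({u, u'} : Set V).ncard := (Set.ncard_pair hne).symm
    _ ≤ (S ∩ A).ncard :=
      Set.ncard_le_ncard (Set.pair_subset ⟨huS, hBA v hv u hvu⟩ ⟨hu'S, hBA w hw u' hwu'⟩)

theorem IsTotalDominatingSet.two_le_ncard [Finite V] [Nonempty V] {G : SimpleGraph V}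
    {S : Set V} (hS : IsTotalDominatingSet G S) : 2 ≤ S.ncard := by
  simpa using hS.two_le_ncard_inter (A := Set.univ) Set.univ_nonempty (fun _ _ _ _ => trivial)
    fun u _ => ⟨u, trivial, G.irrefl⟩

theorem two_le_totalDominationNumber [Finite V] [Nonempty V] {G : SimpleGraph V}
    (hG : NoIsolatedVerts G) : 2 ≤ totalDominationNumber G :=
  le_totalDominationNumber hG fun _ hS => hS.two_le_ncard

theorem totalDominationNumber_completeBipartiteGraph [Finite α] [Finite β] [Nonempty α]
    [Nonempty β] : totalDominationNumber (completeBipartiteGraph α β) = 2 := by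
  obtain ⟨x⟩ := ‹Nonempty α›
  obtain ⟨y⟩ := ‹Nonempty β›
  have hS : IsTotalDominatingSet (completeBipartiteGraph α β) {inl x, inr y} := by
    rintro (_ | _)
    · exact ⟨inr y, by simp, by simp⟩
    · exact ⟨inl x, by simp, by simp⟩
  refine le_antisymm ?_ (two_le_totalDominationNumber hS.noIsolatedVerts)
  simpa [Set.ncard_pair] using totalDominationNumber_le_ncard hS

section DeleteEdges

variable {F : Set (Sym2 (α ⊕ β))}

theorem completeBipartiteGraph_deleteEdges_adj_inr_inl {x : α} {y : β} :
    ((completeBipartiteGraph α β).deleteEdges F).Adj (inr y) (inl x) ↔ s(inl x, inr y) ∉ F := by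
  simp [Sym2.eq_swap]

theorem ncard_preimage_eq_of_subset_edgeSet (hF : F ⊆ (completeBipartiteGraph α β).edgeSet) :
    ((fun p : α × β => s(inl p.1, inr p.2)) ⁻¹' F).ncard = F.ncard := by
  refine Set.ncard_preimage_of_injective_subset_range (fun p q h => ?_) fun e he => ?_
  · simpa [Sym2.eq_iff, Prod.ext_iff] using h
  · induction e using Sym2.ind with
    | h u v =>
      have huv := hF he
      rcases u with x | y <;> rcases v with x' | y' <;> simp at huv
      · exact ⟨(x, y'), rfl⟩
      · exact ⟨(x', y), Sym2.eq_swap⟩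

theorem exists_forall_notMem_of_ncard_lt [Fintype α] [Fintype β]
    (hF : F ⊆ (completeBipartiteGraph α β).edgeSet) (h : F.ncard < Fintype.card β) :
    ∃ y, ∀ x, s(inl x, inr y) ∉ F := by
  classical
  rw [← ncard_preimage_eq_of_subset_edgeSet hF, Set.ncard_eq_toFinset_card'] at h
  obtain ⟨y, -, hy⟩ := Finset.exists_card_fiber_lt_of_card_lt_mul (f := Prod.snd) (n := 1)
    (t := Finset.univ) (by simpa using h)
  refine ⟨y, fun x hx => ?_⟩
  simp only [Nat.lt_one_iff, Finset.card_eq_zero, Finset.filter_eq_empty_iff] at hy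
  exact hy (x := (x, y)) (by simpa using hx) rfl

theorem exists_subsingleton_of_ncard_lt [Fintype α] [Fintype β]
    (hF : F ⊆ (completeBipartiteGraph α β).edgeSet) (h : F.ncard < 2 * Fintype.card α) :
    ∃ x, {y | s(inl x, inr y) ∈ F}.Subsingleton := by
  classical
  rw [← ncard_preimage_eq_of_subset_edgeSet hF, Set.ncard_eq_toFinset_card'] at h
  obtain ⟨x, -, hx⟩ := Finset.exists_card_fiber_lt_of_card_lt_mul (f := Prod.fst) (n := 2)
    (t := Finset.univ) (by simpa [mul_comm] using h)
  refine ⟨x, fun y hy y' hy' => ?_⟩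
  rw [Nat.lt_succ_iff, Finset.card_le_one] at hx
  simpa using hx (x, y) (by simpa using hy) (x, y') (by simpa using hy')

theorem totalDominationNumber_deleteEdges_le_three [Fintype α] [Fintype β]
    (hF : F ⊆ (completeBipartiteGraph α β).edgeSet) (hFβ : F.ncard < Fintype.card β)
    (hβα : Fintype.card β ≤ 2 * Fintype.card α)
    (hG : NoIsolatedVerts ((completeBipartiteGraph α β).deleteEdges F)) :
    totalDominationNumber ((completeBipartiteGraph α β).deleteEdges F) ≤ 3 := by
  obtain ⟨y₀, hy₀⟩ := exists_forall_notMem_of_ncard_lt hF hFβ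
  obtain ⟨x₁, hx₁⟩ := exists_subsingleton_of_ncard_lt hF (hFβ.trans_le hβα)
  obtain ⟨x₂, hx₂⟩ : ∃ x₂, ∀ y, s(inl x₁, inr y) ∈ F → s(inl x₂, inr y) ∉ F := by
    by_cases h : ∃ y₁, s(inl x₁, inr y₁) ∈ F
    · obtain ⟨y₁, hy₁⟩ := h
      obtain ⟨x₂ | _, hx₂⟩ := hG (inr y₁)
      · exact ⟨x₂, fun y hy => hx₁ hy₁ hy ▸ completeBipartiteGraph_deleteEdges_adj_inr_inl.1 hx₂⟩
      · simp at hx₂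
    · exact ⟨x₁, fun y hy => absurd ⟨y, hy⟩ h⟩
  have hS : IsTotalDominatingSet ((completeBipartiteGraph α β).deleteEdges F)
      {inr y₀, inl x₁, inl x₂} := by
    rintro (x | y)
    · exact ⟨inr y₀, by simp, by simpa using hy₀ x⟩
    · by_cases hy : s(inl x₁, inr y) ∈ F
      · exact ⟨inl x₂, by simp, completeBipartiteGraph_deleteEdges_adj_inr_inl.2 (hx₂ y hy)⟩
      · exact ⟨inl x₁, by simp, completeBipartiteGraph_deleteEdges_adj_inr_inl.2 hy⟩
  calc _ ≤ _ := totalDominationNumber_le_ncard hS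
    _ ≤ 3 := (Set.ncard_insert_le _ _).trans <| by
      grw [Set.ncard_insert_le, Set.ncard_singleton]

end DeleteEdges

section FunGraphEdges

variable (σ : β → α)

def funGraphEdges : Set (Sym2 (α ⊕ β)) :=
  Set.range fun y => s(inl (σ y), inr y)

theorem funGraphEdges_subset_edgeSet :
    funGraphEdges σ ⊆ (completeBipartiteGraph α β).edgeSet := by
  rintro _ ⟨y, rfl⟩
  simp

theorem ncard_funGraphEdges [Finite β] : (funGraphEdges σ).ncard = Nat.card β := by
  rw [funGraphEdges, ← Set.image_univ, Set.ncard_image_of_injective, Set.ncard_univ]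
  intro y y' h
  simp_all

theorem deleteEdges_funGraphEdges_adj_inl_inr {x : α} {y : β} :
    ((completeBipartiteGraph α β).deleteEdges (funGraphEdges σ)).Adj (inl x) (inr y) ↔
      σ y ≠ x := by
  simp [funGraphEdges, eq_comm]

variable {σ}

theorem noIsolatedVerts_deleteEdges_funGraphEdges [Nontrivial α] (hσ : Surjective σ) :
    NoIsolatedVerts ((completeBipartiteGraph α β).deleteEdges (funGraphEdges σ)) := by
  rintro (x | y)
  · obtain ⟨x', hx'⟩ := exists_ne x
    obtain ⟨y, rfl⟩ := hσ x'
    exact ⟨inr y, (deleteEdges_funGraphEdges_adj_inl_inr σ).2 hx'⟩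
  · obtain ⟨x, hx⟩ := exists_ne (σ y)
    exact ⟨inl x, ((deleteEdges_funGraphEdges_adj_inl_inr σ).2 hx.symm).symm⟩

theorem four_le_totalDominationNumber_deleteEdges_funGraphEdges [Finite α] [Finite β]
    [Nontrivial α] [Nonempty β] (hσ : Surjective σ) :
    4 ≤ totalDominationNumber ((completeBipartiteGraph α β).deleteEdges (funGraphEdges σ)) := by
  refine le_totalDominationNumber (noIsolatedVerts_deleteEdges_funGraphEdges hσ) fun S hS => ?_
  have hα : 2 ≤ (S ∩ Set.range inl).ncard := by
    refine hS.two_le_ncard_inter (Set.range_nonempty inr) ?_ ?_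
    · rintro _ ⟨y, rfl⟩ (x | _) h
      · exact ⟨x, rfl⟩
      · simp at h
    · rintro _ ⟨x, rfl⟩
      obtain ⟨y, rfl⟩ := hσ x
      exact ⟨inr y, ⟨y, rfl⟩, fun h => (deleteEdges_funGraphEdges_adj_inl_inr σ).1 h.symm rfl⟩
  have hβ : 2 ≤ (S ∩ Set.range inr).ncard := by
    refine hS.two_le_ncard_inter (Set.range_nonempty inl) ?_ ?_
    · rintro _ ⟨x, rfl⟩ (_ | y) h
      · simp at h
      · exact ⟨y, rfl⟩
    · rintro _ ⟨y, rfl⟩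
      exact ⟨inl (σ y), ⟨σ y, rfl⟩, fun h => (deleteEdges_funGraphEdges_adj_inl_inr σ).1 h rfl⟩
  calc 4 ≤ (S ∩ Set.range inl ∪ S ∩ Set.range inr).ncard := by
        rw [Set.ncard_union_eq]
        · omega
        · exact Set.isCompl_range_inl_range_inr.disjoint.mono Set.inter_subset_right
            Set.inter_subset_right
    _ ≤ S.ncard := Set.ncard_le_ncard (Set.union_subset Set.inter_subset_left Set.inter_subset_left)

end FunGraphEdges

/-- For `2 ≤ a ≤ b ≤ 2a`, the `2`-total bondage number of the complete
bipartite graph `K_{a,b}` equals `b`. -/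
theorem kTotalBondage_completeBipartiteGraph_two (a b : ℕ) (ha : 2 ≤ a)
    (hab : a ≤ b) (hb2a : b ≤ 2 * a) :
    kTotalBondage (completeBipartiteGraph (Fin a) (Fin b)) 2 = b := by
  have : Nontrivial (Fin a) := Fin.nontrivial_iff_two_le.2 ha
  have : Nonempty (Fin b) := ⟨⟨0, by omega⟩⟩
  have hK : totalDominationNumber (completeBipartiteGraph (Fin a) (Fin b)) = 2 :=
    totalDominationNumber_completeBipartiteGraph
  let σ : Fin b → Fin a := fun j => ⟨j % a, Nat.mod_lt _ (by omega)⟩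
  have hσ : Surjective σ := fun i => ⟨⟨i, by omega⟩, Fin.ext (Nat.mod_eq_of_lt i.isLt)⟩
  have hb : b ∈ {m | ∃ F : Set (Sym2 (Fin a ⊕ Fin b)),
      F ⊆ (completeBipartiteGraph (Fin a) (Fin b)).edgeSet ∧ F.ncard = m ∧
      NoIsolatedVerts ((completeBipartiteGraph (Fin a) (Fin b)).deleteEdges F) ∧
      totalDominationNumber (completeBipartiteGraph (Fin a) (Fin b)) + 2 ≤
        totalDominationNumber ((completeBipartiteGraph (Fin a) (Fin b)).deleteEdges F)} :=
    ⟨funGraphEdges σ, funGraphEdges_subset_edgeSet σ, by simp [ncard_funGraphEdges],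
      noIsolatedVerts_deleteEdges_funGraphEdges hσ,
      by rw [hK]; exact four_le_totalDominationNumber_deleteEdges_funGraphEdges hσ⟩
  refine le_antisymm (Nat.sInf_le hb) (le_csInf ⟨b, hb⟩ ?_)
  rintro m ⟨F, hF, rfl, hG, hge⟩
  by_contra! hlt
  have := totalDominationNumber_deleteEdges_le_three hF (by simpa using hlt) (by simpa using hb2a) hG
  omega
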